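/- arXiv:1702.07958 — 8 statements merged into one kernel-verified Lean document; each statement's English description precedes it below -/
import Mathlib

section
/- Let k ≥ 2, d ≥ 1, T ≥ 1, and let (x_1,y_1),…,(x_T,y_T) ∈ ℝ^d × {1,…,k} be any sequence with ‖x_t‖ ≤ X for all t ∈ [T]. Run the multiclass Perceptron on this sequence and let M_T be its number of mistakes. Then for every linear predictor U ∈ ℝ^{k×d} and every q ∈ [1,2], M_T ≤ M_T^{1−1/q} · (Σ_{t=1}^T ℓ(U,(x_t,y_t))^q)^{1/q} + ‖U‖_F · X · √2 · √(M_T), where ‖U‖_F is the Frobenius norm of U. -/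
/-!
Track `⟪U, W_t⟫` and `‖W_t‖` in the Frobenius inner product. On a mistake the update
`(e_y - e_ŷ) xᵀ` raises `⟪U, W⟫` by `(Ux)_y - (Ux)_ŷ ≥ 1 - ℓ_t`, while `‖W‖²` grows by at most
`2‖x‖² ≤ 2X²`, because the cross term `(Wx)_y - (Wx)_ŷ` is `≤ 0` when `ŷ` maximises `Wx`.
Cauchy–Schwarz then gives `M - ∑_{mistakes} ℓ_t ≤ ⟪U, W_T⟫ ≤ ‖U‖_F X √(2M)`, and Hölder's
inequality over the `M` mistaken rounds bounds `∑_{mistakes} ℓ_t ≤ M^{1-1/q} ‖ℓ‖_q`.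
-/

open Finset

/-- Multiclass hinge loss: `max_{i ≠ y} [1 - (Ux)_y + (Ux)_i]_+`. -/
noncomputable def mcHinge {k d : ℕ} (U : Matrix (Fin k) (Fin d) ℝ)
    (x : Fin d → ℝ) (y : Fin k) : ℝ :=
  ⨆ i : {i : Fin k // i ≠ y}, max 0 (1 - U.mulVec x y + U.mulVec x i.val)

open Matrix
open scoped RealInnerProductSpace

section Flatten

variable {m n : Type*}

/-- Under this map `⟪·, ·⟫_ℝ` and `‖·‖` become the Frobenius inner product and norm. -/
noncomputable def Matrix.toEuclideanSpace : Matrix m n ℝ →ₗ[ℝ] EuclideanSpace ℝ (m × n) :=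
  (WithLp.linearEquiv 2 ℝ (m × n → ℝ)).symm.toLinearMap ∘ₗ
    (LinearEquiv.curry ℝ ℝ m n).symm.toLinearMap

@[simp]
lemma Matrix.toEuclideanSpace_apply (A : Matrix m n ℝ) (p : m × n) :
    A.toEuclideanSpace p = A p.1 p.2 :=
  rfl

variable [Fintype m] [Fintype n]

lemma Matrix.inner_toEuclideanSpace (A B : Matrix m n ℝ) :
    ⟪A.toEuclideanSpace, B.toEuclideanSpace⟫ = ∑ i, ∑ j, A i j * B i j := by
  simp [PiLp.inner_apply, Fintype.sum_prod_type, mul_comm]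

lemma Matrix.norm_toEuclideanSpace (A : Matrix m n ℝ) :
    ‖A.toEuclideanSpace‖ = √(∑ i, ∑ j, A i j ^ 2) := by
  simp [EuclideanSpace.norm_eq, Fintype.sum_prod_type]

lemma Matrix.inner_toEuclideanSpace_vecMulVec (A : Matrix m n ℝ) (u : m → ℝ) (v : n → ℝ) :
    ⟪A.toEuclideanSpace, (vecMulVec u v).toEuclideanSpace⟫ = u ⬝ᵥ (A *ᵥ v) := by
  simp only [inner_toEuclideanSpace, vecMulVec_apply, dotProduct, mulVec, mul_sum]
  exact sum_congr rfl fun i _ => sum_congr rfl fun j _ => by ring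

lemma Matrix.norm_toEuclideanSpace_vecMulVec_sq (u : m → ℝ) (v : n → ℝ) :
    ‖(vecMulVec u v).toEuclideanSpace‖ ^ 2 = (u ⬝ᵥ u) * (v ⬝ᵥ v) := by
  rw [← real_inner_self_eq_norm_sq, inner_toEuclideanSpace_vecMulVec, vecMulVec_mulVec]
  simp [dotProduct_smul, mul_comm]

end Flatten

section SingleSubSingle

variable {m : Type*} [Fintype m] [DecidableEq m]

lemma single_sub_single_dotProduct (a b : m) (w : m → ℝ) :
    (Pi.single a 1 - Pi.single b 1) ⬝ᵥ w = w a - w b := by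
  simp [sub_dotProduct, single_dotProduct]

lemma single_sub_single_dotProduct_self {a b : m} (hab : a ≠ b) :
    (Pi.single a 1 - Pi.single b 1 : m → ℝ) ⬝ᵥ (Pi.single a 1 - Pi.single b 1) = 2 := by
  rw [single_sub_single_dotProduct]
  norm_num [hab, hab.symm]

end SingleSubSingle

lemma le_add_sum_of_succ_le {T : ℕ} {f : ℕ → ℝ} {g : Fin T → ℝ}
    (h : ∀ t : Fin T, f (t + 1) ≤ f t + g t) : f T ≤ f 0 + ∑ t, g t := by
  have htel := sum_range_sub f T
  rw [← Fin.sum_univ_eq_sum_range (fun t => f (t + 1) - f t)] at htel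
  have := sum_le_sum fun t (_ : t ∈ univ) => sub_le_iff_le_add'.2 (h t)
  linarith

lemma sum_le_card_rpow_mul_rpow_sum {ι : Type*} [Fintype ι] (s : Finset ι) {g : ι → ℝ}
    (hg : ∀ i, 0 ≤ g i) {q : ℝ} (hq : 1 ≤ q) :
    ∑ i ∈ s, g i ≤ (#s : ℝ) ^ (1 - 1 / q) * (∑ i, g i ^ q) ^ (1 / q) := by
  have hq0 : 0 < q := by linarith
  have hs : 0 ≤ ∑ i ∈ s, g i := sum_nonneg fun i _ => hg i
  have hpow : (∑ i ∈ s, g i) ^ q ≤ (#s : ℝ) ^ (q - 1) * ∑ i, g i ^ q :=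
    (Real.rpow_sum_le_const_mul_sum_rpow_of_nonneg s hq fun i _ => hg i).trans <|
      mul_le_mul_of_nonneg_left
        (sum_le_sum_of_subset_of_nonneg (subset_univ s) fun i _ _ => by have := hg i; positivity)
        (by positivity)
  calc ∑ i ∈ s, g i = ((∑ i ∈ s, g i) ^ q) ^ (1 / q) := by
        rw [← Real.rpow_mul hs, mul_one_div_cancel hq0.ne', Real.rpow_one]
    _ ≤ ((#s : ℝ) ^ (q - 1) * ∑ i, g i ^ q) ^ (1 / q) :=
        Real.rpow_le_rpow (Real.rpow_nonneg hs q) hpow (by positivity)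
    _ = (#s : ℝ) ^ (1 - 1 / q) * (∑ i, g i ^ q) ^ (1 / q) := by
        rw [Real.mul_rpow (by positivity) (sum_nonneg fun i _ => by have := hg i; positivity),
          ← Real.rpow_mul (by positivity)]
        congr 2
        field_simp

section Hinge

variable {k d : ℕ} (U : Matrix (Fin k) (Fin d) ℝ) (x : Fin d → ℝ)

lemma mcHinge_nonneg (y : Fin k) : 0 ≤ mcHinge U x y :=
  Real.iSup_nonneg fun _ => le_max_left _ _

lemma le_mcHinge {y i : Fin k} (hi : i ≠ y) :
    1 - (U *ᵥ x) y + (U *ᵥ x) i ≤ mcHinge U x y :=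
  (le_max_right 0 _).trans <|
    le_ciSup (f := fun i : {i // i ≠ y} => max 0 (1 - (U *ᵥ x) y + (U *ᵥ x) i))
      (Set.finite_range _).bddAbove ⟨i, hi⟩

end Hinge

section Perceptron

variable {k d : ℕ}

noncomputable def perceptronUpdate (W : Matrix (Fin k) (Fin d) ℝ) (x : Fin d → ℝ)
    (y ŷ : Fin k) : Matrix (Fin k) (Fin d) ℝ :=
  W + (if ŷ ≠ y then (1 : ℝ) else 0) • vecMulVec (Pi.single y 1 - Pi.single ŷ 1) x

lemma inner_perceptronUpdate_ge (U W : Matrix (Fin k) (Fin d) ℝ) (x : Fin d → ℝ)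
    (y ŷ : Fin k) :
    ⟪U.toEuclideanSpace, W.toEuclideanSpace⟫ + (if ŷ ≠ y then 1 else 0) * (1 - mcHinge U x y)
      ≤ ⟪U.toEuclideanSpace, (perceptronUpdate W x y ŷ).toEuclideanSpace⟫ := by
  by_cases hŷ : ŷ ≠ y
  · have := le_mcHinge U x hŷ
    rw [perceptronUpdate, if_pos hŷ, one_smul, one_mul, map_add, inner_add_right,
      inner_toEuclideanSpace_vecMulVec, single_sub_single_dotProduct]
    linarith
  · simp [perceptronUpdate, hŷ]

lemma norm_perceptronUpdate_sq_le (W : Matrix (Fin k) (Fin d) ℝ) (x : Fin d → ℝ)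
    {y ŷ : Fin k} (hŷ : (W *ᵥ x) y ≤ (W *ᵥ x) ŷ) :
    ‖(perceptronUpdate W x y ŷ).toEuclideanSpace‖ ^ 2
      ≤ ‖W.toEuclideanSpace‖ ^ 2 + (if ŷ ≠ y then 1 else 0) * (2 * ∑ j, x j ^ 2) := by
  by_cases hne : ŷ ≠ y
  · have hx : x ⬝ᵥ x = ∑ j, x j ^ 2 := by simp [dotProduct, sq]
    rw [perceptronUpdate, if_pos hne, one_smul, one_mul, map_add, norm_add_sq_real,
      inner_toEuclideanSpace_vecMulVec, single_sub_single_dotProduct,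
      norm_toEuclideanSpace_vecMulVec_sq, single_sub_single_dotProduct_self (Ne.symm hne), hx]
    linarith
  · simp [perceptronUpdate, hne]

variable {T : ℕ} {x : Fin T → Fin d → ℝ} {y yh : Fin T → Fin k}
  {W : ℕ → Matrix (Fin k) (Fin d) ℝ}

lemma inner_perceptron_run_ge (U : Matrix (Fin k) (Fin d) ℝ) (hW0 : W 0 = 0)
    (hstep : ∀ t : Fin T, W (t + 1) = perceptronUpdate (W t) (x t) (y t) (yh t)) :
    ∑ t, (if yh t ≠ y t then 1 else 0) * (1 - mcHinge U (x t) (y t))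
      ≤ ⟪U.toEuclideanSpace, (W T).toEuclideanSpace⟫ := by
  have := le_add_sum_of_succ_le (f := fun n => -⟪U.toEuclideanSpace, (W n).toEuclideanSpace⟫)
    (g := fun t => -((if yh t ≠ y t then 1 else 0) * (1 - mcHinge U (x t) (y t)))) fun t => by
      have := inner_perceptronUpdate_ge U (W t) (x t) (y t) (yh t)
      simp only [hstep t]
      linarith
  simpa [hW0] using this

lemma norm_perceptron_run_sq_le {R : ℝ} (hx : ∀ t, ∑ j, x t j ^ 2 ≤ R) (hW0 : W 0 = 0)
    (hstep : ∀ t : Fin T, W (t + 1) = perceptronUpdate (W t) (x t) (y t) (yh t))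
    (hargmax : ∀ t : Fin T, ∀ i, (W t *ᵥ x t) i ≤ (W t *ᵥ x t) (yh t)) :
    ‖(W T).toEuclideanSpace‖ ^ 2 ≤ (∑ t, if yh t ≠ y t then (1 : ℝ) else 0) * (2 * R) := by
  have := le_add_sum_of_succ_le (f := fun n => ‖(W n).toEuclideanSpace‖ ^ 2)
    (g := fun t => (if yh t ≠ y t then 1 else 0) * (2 * R)) fun t => by
      simp only [hstep t]
      refine (norm_perceptronUpdate_sq_le _ _ (hargmax t (y t))).trans ?_
      gcongr
      exact hx t
  simpa [hW0, sum_mul] using this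

end Perceptron

theorem multiclass_perceptron_general_mistake_bound_general
    (k d T : ℕ) (hT : 1 ≤ T)
    (x : Fin T → Fin d → ℝ) (y : Fin T → Fin k)
    (X : ℝ) (hX : ∀ t, Real.sqrt (∑ j, x t j ^ 2) ≤ X)
    (W : ℕ → Matrix (Fin k) (Fin d) ℝ) (yh : Fin T → Fin k)
    (hW0 : W 0 = 0)
    (hargmax : ∀ t : Fin T, ∀ i : Fin k,
      (W t.val).mulVec (x t) i ≤ (W t.val).mulVec (x t) (yh t))
    (hWsucc : ∀ t : Fin T, W (t.val + 1) =
      W t.val + (if yh t ≠ y t then (1:ℝ) else 0) •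
        Matrix.vecMulVec (Pi.single (y t) 1 - Pi.single (yh t) 1) (x t))
    (M : ℝ) (hM : M = ∑ t, if yh t ≠ y t then (1:ℝ) else 0)
    (U : Matrix (Fin k) (Fin d) ℝ) (q : ℝ) (hq1 : 1 ≤ q) :
    M ≤ M ^ (1 - 1/q) * (∑ t, (mcHinge U (x t) (y t)) ^ q) ^ (1/q)
      + Real.sqrt (∑ i, ∑ j, U i j ^ 2) * X * Real.sqrt 2 * Real.sqrt M := by
  set mistakes : Finset (Fin T) := {t | yh t ≠ y t}
  set ℓ : Fin T → ℝ := fun t => mcHinge U (x t) (y t)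
  have hM' : M = #mistakes := by rw [hM, sum_boole]
  have hprogress : M - ∑ t ∈ mistakes, ℓ t ≤ ⟪U.toEuclideanSpace, (W T).toEuclideanSpace⟫ := by
    have := inner_perceptron_run_ge U hW0 hWsucc
    simpa only [mul_sub, mul_one, sum_sub_distrib, ← hM, ite_mul, one_mul, zero_mul,
      ← sum_filter] using this
  have hX0 : 0 ≤ X := (Real.sqrt_nonneg _).trans (hX ⟨0, hT⟩)
  have hnorm : ‖(W T).toEuclideanSpace‖ ≤ √2 * X * √M :=
    calc ‖(W T).toEuclideanSpace‖ ≤ √(M * (2 * X ^ 2)) :=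
          Real.le_sqrt_of_sq_le <| hM ▸ norm_perceptron_run_sq_le
            (fun t => (Real.sqrt_le_iff.1 (hX t)).2) hW0 hWsucc hargmax
      _ = √2 * X * √M := by
        rw [Real.sqrt_mul' _ (by positivity), Real.sqrt_mul zero_le_two, Real.sqrt_sq hX0]
        ring
  have hholder : ∑ t ∈ mistakes, ℓ t ≤ M ^ (1 - 1 / q) * (∑ t, ℓ t ^ q) ^ (1 / q) :=
    hM' ▸ sum_le_card_rpow_mul_rpow_sum mistakes (fun t => mcHinge_nonneg U (x t) (y t)) hq1
  calc M ≤ ∑ t ∈ mistakes, ℓ t + ⟪U.toEuclideanSpace, (W T).toEuclideanSpace⟫ := by linarith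
    _ ≤ M ^ (1 - 1 / q) * (∑ t, ℓ t ^ q) ^ (1 / q) + ‖U.toEuclideanSpace‖ * (√2 * X * √M) :=
        add_le_add hholder ((real_inner_le_norm _ _).trans (by gcongr))
    _ = _ := by
        rw [norm_toEuclideanSpace]
        ring

theorem multiclass_perceptron_general_mistake_bound
    (k d T : ℕ) (hk : 2 ≤ k) (hd : 1 ≤ d) (hT : 1 ≤ T)
    (x : Fin T → Fin d → ℝ) (y : Fin T → Fin k)
    (X : ℝ) (hX : ∀ t, Real.sqrt (∑ j, x t j ^ 2) ≤ X)
    (W : ℕ → Matrix (Fin k) (Fin d) ℝ) (yh : Fin T → Fin k)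
    (hW0 : W 0 = 0)
    (hargmax : ∀ t : Fin T, ∀ i : Fin k,
      (W t.val).mulVec (x t) i ≤ (W t.val).mulVec (x t) (yh t))
    (hWsucc : ∀ t : Fin T, W (t.val + 1) =
      W t.val + (if yh t ≠ y t then (1:ℝ) else 0) •
        Matrix.vecMulVec (Pi.single (y t) 1 - Pi.single (yh t) 1) (x t))
    (M : ℝ) (hM : M = ∑ t, if yh t ≠ y t then (1:ℝ) else 0)
    (U : Matrix (Fin k) (Fin d) ℝ) (q : ℝ) (hq1 : 1 ≤ q) (hq2 : q ≤ 2) :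
    M ≤ M ^ (1 - 1/q) * (∑ t, (mcHinge U (x t) (y t)) ^ q) ^ (1/q)
      + Real.sqrt (∑ i, ∑ j, U i j ^ 2) * X * Real.sqrt 2 * Real.sqrt M :=
  multiclass_perceptron_general_mistake_bound_general k d T hT x y X hX W yh hW0 hargmax hWsucc M hM
    U q hq1
end

section
/- Under the SOBA-type recursion below, if Σ_{t=1}^T n_t m_t ≥ 0, then for every U ∈ ℝ^N: Σ_{t=1}^T n_t (−2⟨U, g_t⟩ − ⟨U, z_t⟩²) ≤ a ‖U‖² + Σ_{t=1}^T n_t · g_tᵀ A_t^{−1} g_t. -/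
open Finset Matrix

/-!
Track the potential `Φ t = θ tᵀ (A t)⁻¹ θ t`. By Sherman–Morrison a rank-one update changes it by
exactly `n t * (-m t + g tᵀ (A (t+1))⁻¹ g t)`, so `Φ T` telescopes to `-∑ n m + ∑ n gᵀA⁻¹g`.
The left-hand side telescopes to `2 ⟪θ T, U⟫ - Uᵀ (A T) U + a ‖U‖²`, and completing the square
in the positive definite form `A T` bounds `2 ⟪θ T, U⟫ - Uᵀ (A T) U` by `Φ T`.
-/

namespace Matrix

variable {ι : Type*} [Fintype ι]

theorem posDef_of_succ_eq_add_smul_vecMulVec {A : ℕ → Matrix ι ι ℝ}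
    {c : ℕ → ℝ} {z : ℕ → ι → ℝ} (h0 : (A 0).PosDef) (hc : ∀ t, 0 ≤ c t)
    (hA : ∀ t, A (t + 1) = A t + c t • vecMulVec (z t) (z t)) (t : ℕ) : (A t).PosDef := by
  induction t with
  | zero => exact h0
  | succ t ih =>
    rw [hA t]
    exact ih.add_posSemidef ((posSemidef_vecMulVec_self_star (z t)).smul (hc t))

variable [DecidableEq ι] {K : Type*} [Field K]

theorem inv_add_vecMulVec {A : Matrix ι ι K} (hA : IsUnit A.det) (u v : ι → K)
    (h : 1 + v ⬝ᵥ (A⁻¹ *ᵥ u) ≠ 0) :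
    (A + vecMulVec u v)⁻¹
      = A⁻¹ - (1 + v ⬝ᵥ (A⁻¹ *ᵥ u))⁻¹ • vecMulVec (A⁻¹ *ᵥ u) (v ᵥ* A⁻¹) := by
  refine inv_eq_right_inv ?_
  have hAA : A * A⁻¹ = 1 := mul_nonsing_inv A hA
  have hc : (1 + v ⬝ᵥ (A⁻¹ *ᵥ u))⁻¹ * (1 + v ⬝ᵥ (A⁻¹ *ᵥ u)) = 1 := inv_mul_cancel₀ h
  rw [add_mul, mul_sub, mul_sub, hAA, Matrix.mul_smul, Matrix.mul_smul, mul_vecMulVec,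
    mulVec_mulVec, hAA, one_mulVec, vecMulVec_mul, vecMulVec_mul_vecMulVec, vecMulVec_smul]
  linear_combination (norm := module) -hc • vecMulVec u (v ᵥ* A⁻¹)

theorem dotProduct_inv_add_vecMulVec_mulVec {A : Matrix ι ι K} (hA : IsUnit A.det)
    (u v x y : ι → K) (h : 1 + v ⬝ᵥ (A⁻¹ *ᵥ u) ≠ 0) :
    x ⬝ᵥ ((A + vecMulVec u v)⁻¹ *ᵥ y)
      = x ⬝ᵥ (A⁻¹ *ᵥ y)
        - (x ⬝ᵥ (A⁻¹ *ᵥ u)) * (v ⬝ᵥ (A⁻¹ *ᵥ y)) / (1 + v ⬝ᵥ (A⁻¹ *ᵥ u)) := by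
  rw [inv_add_vecMulVec hA u v h, sub_mulVec, smul_mulVec, vecMulVec_mulVec, ← dotProduct_mulVec]
  simp only [dotProduct_sub, dotProduct_smul, op_smul_eq_smul, smul_eq_mul]
  ring

theorem IsSymm.dotProduct_inv_add_vecMulVec_mulVec_sub_smul {A : Matrix ι ι K} (hsymm : A.IsSymm)
    (hA : IsUnit A.det) (θ z : ι → K) (c : K) (h : 1 + z ⬝ᵥ (A⁻¹ *ᵥ z) ≠ 0) :
    (θ - c • z) ⬝ᵥ ((A + vecMulVec z z)⁻¹ *ᵥ (θ - c • z))
      = θ ⬝ᵥ (A⁻¹ *ᵥ θ)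
        - (((A⁻¹ *ᵥ θ) ⬝ᵥ z) ^ 2 + 2 * ((A⁻¹ *ᵥ θ) ⬝ᵥ (c • z))) / (1 + z ⬝ᵥ (A⁻¹ *ᵥ z))
        + (c • z) ⬝ᵥ ((A + vecMulVec z z)⁻¹ *ᵥ (c • z)) := by
  have hθz : θ ⬝ᵥ (A⁻¹ *ᵥ z) = z ⬝ᵥ (A⁻¹ *ᵥ θ) := by
    simpa only [hsymm.inv.eq] using dotProduct_transpose_mulVec A⁻¹ θ z
  simp only [dotProduct_inv_add_vecMulVec_mulVec hA _ _ _ _ h, mulVec_sub, mulVec_smul,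
    dotProduct_sub, sub_dotProduct, dotProduct_smul, smul_dotProduct, smul_eq_mul, hθz,
    dotProduct_comm _ z]
  field_simp
  ring

theorem PosDef.two_mul_dotProduct_sub_le {A : Matrix ι ι ℝ} (hA : A.PosDef) (θ U : ι → ℝ) :
    2 * (θ ⬝ᵥ U) - U ⬝ᵥ (A *ᵥ U) ≤ θ ⬝ᵥ (A⁻¹ *ᵥ θ) := by
  have hAw : A *ᵥ (A⁻¹ *ᵥ θ) = θ := by
    rw [mulVec_mulVec, mul_nonsing_inv A hA.det_pos.ne'.isUnit, one_mulVec]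
  have hsymm : Aᵀ = A := (isHermitian_iff_isSymm.mp hA.isHermitian).eq
  have hnonneg := hA.posSemidef.dotProduct_mulVec_nonneg (U - A⁻¹ *ᵥ θ)
  have hUw : (A⁻¹ *ᵥ θ) ⬝ᵥ (A *ᵥ U) = θ ⬝ᵥ U := by
    rw [← dotProduct_transpose_mulVec, hsymm, hAw, dotProduct_comm]
  simp only [star_trivial, mulVec_sub, hAw, dotProduct_sub, sub_dotProduct, hUw,
    dotProduct_comm U θ, dotProduct_comm (A⁻¹ *ᵥ θ) θ] at hnonneg
  linarith

end Matrix

theorem soba_second_order_regret_lemma_general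
    (N T : ℕ) (a : ℝ) (ha : 0 < a)
    (z : ℕ → Fin N → ℝ) (α : ℕ → ℝ)
    (n : ℕ → ℝ) (hn : ∀ t, n t = 0 ∨ n t = 1)
    (g : ℕ → Fin N → ℝ) (hg : ∀ t, g t = α t • z t)
    (A : ℕ → Matrix (Fin N) (Fin N) ℝ)
    (hA0 : A 0 = a • (1 : Matrix (Fin N) (Fin N) ℝ))
    (hA : ∀ t, A (t + 1) = A t + n t • Matrix.vecMulVec (z t) (z t))
    (θ : ℕ → Fin N → ℝ) (hθ0 : θ 0 = 0)
    (hθ : ∀ t, θ (t + 1) = θ t - n t • g t)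
    (W : ℕ → Fin N → ℝ) (hW : ∀ t, W t = (A t)⁻¹ *ᵥ θ t)
    (m : ℕ → ℝ)
    (hm : ∀ t, m t = ((W t ⬝ᵥ z t) ^ 2 + 2 * (W t ⬝ᵥ g t)) / (1 + z t ⬝ᵥ ((A t)⁻¹ *ᵥ z t)))
    (hinv : 0 ≤ ∑ t ∈ Finset.range T, n t * m t)
    (U : Fin N → ℝ) :
    ∑ t ∈ Finset.range T, n t * (-(2 * (U ⬝ᵥ g t)) - (U ⬝ᵥ z t) ^ 2)
      ≤ a * (U ⬝ᵥ U) + ∑ t ∈ Finset.range T, n t * (g t ⬝ᵥ ((A (t + 1))⁻¹ *ᵥ g t)) := by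
  have hpos : ∀ t, (A t).PosDef := posDef_of_succ_eq_add_smul_vecMulVec
    (hA0 ▸ PosDef.one.smul ha) (fun t => by rcases hn t with h | h <;> simp [h]) hA
  set Φ : ℕ → ℝ := fun t => θ t ⬝ᵥ ((A t)⁻¹ *ᵥ θ t)
  set Q : ℕ → ℝ := fun t => 2 * (θ t ⬝ᵥ U) - U ⬝ᵥ (A t *ᵥ U)
  have hΦ : ∀ t, Φ (t + 1) - Φ t = n t * (-m t + g t ⬝ᵥ ((A (t + 1))⁻¹ *ᵥ g t)) := by
    intro t
    rcases hn t with h | h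
    · simp [Φ, hθ, hA, h]
    · have hs : 0 ≤ z t ⬝ᵥ ((A t)⁻¹ *ᵥ z t) := by
        simpa using (hpos t).inv.posSemidef.dotProduct_mulVec_nonneg (z t)
      simp only [Φ, hθ, hA, h, one_smul, one_mul, hg, hm, hW]
      have hsymm : (A t).IsSymm := isHermitian_iff_isSymm.mp (hpos t).isHermitian
      rw [hsymm.dotProduct_inv_add_vecMulVec_mulVec_sub_smul (hpos t).det_pos.ne'.isUnit _ _ _
        (by positivity)]
      ring
  have hQ : ∀ t, Q (t + 1) - Q t = n t * (-(2 * (U ⬝ᵥ g t)) - (U ⬝ᵥ z t) ^ 2) := by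
    intro t
    simp only [Q, hθ, hA, add_mulVec, smul_mulVec, vecMulVec_mulVec, op_smul_eq_smul,
      dotProduct_sub, dotProduct_add, dotProduct_smul, smul_eq_mul, dotProduct_comm _ U]
    ring
  have hQ0 : Q 0 = -(a * (U ⬝ᵥ U)) := by simp [Q, hθ0, hA0, smul_mulVec]
  have hΦ0 : Φ 0 = 0 := by simp [Φ, hθ0]
  calc ∑ t ∈ range T, n t * (-(2 * (U ⬝ᵥ g t)) - (U ⬝ᵥ z t) ^ 2)
      = Q T - Q 0 := by rw [← sum_range_sub]; exact sum_congr rfl fun t _ => (hQ t).symm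
    _ ≤ Φ T - Φ 0 + a * (U ⬝ᵥ U) := by
      have := (hpos T).two_mul_dotProduct_sub_le (θ T) U
      rw [hQ0, hΦ0]; linarith
    _ = -∑ t ∈ range T, n t * m t + ∑ t ∈ range T, n t * (g t ⬝ᵥ ((A (t + 1))⁻¹ *ᵥ g t))
        + a * (U ⬝ᵥ U) := by
      rw [← sum_range_sub, ← sum_neg_distrib, ← sum_add_distrib]
      simp only [hΦ]; congr 1; exact sum_congr rfl fun t _ => by ring
    _ ≤ _ := by linarith

theorem soba_second_order_regret_lemma
    (N T : ℕ) (hN : 1 ≤ N) (hT : 1 ≤ T) (a : ℝ) (ha : 0 < a)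
    (z : ℕ → Fin N → ℝ) (α : ℕ → ℝ)
    (n : ℕ → ℝ) (hn : ∀ t, n t = 0 ∨ n t = 1)
    (g : ℕ → Fin N → ℝ) (hg : ∀ t, g t = α t • z t)
    (A : ℕ → Matrix (Fin N) (Fin N) ℝ)
    (hA0 : A 0 = a • (1 : Matrix (Fin N) (Fin N) ℝ))
    (hA : ∀ t, A (t + 1) = A t + n t • Matrix.vecMulVec (z t) (z t))
    (θ : ℕ → Fin N → ℝ) (hθ0 : θ 0 = 0)
    (hθ : ∀ t, θ (t + 1) = θ t - n t • g t)
    (W : ℕ → Fin N → ℝ) (hW : ∀ t, W t = (A t)⁻¹ *ᵥ θ t)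
    (m : ℕ → ℝ)
    (hm : ∀ t, m t = ((W t ⬝ᵥ z t) ^ 2 + 2 * (W t ⬝ᵥ g t)) / (1 + z t ⬝ᵥ ((A t)⁻¹ *ᵥ z t)))
    (hinv : 0 ≤ ∑ t ∈ Finset.range T, n t * m t)
    (U : Fin N → ℝ) :
    ∑ t ∈ Finset.range T, n t * (-(2 * (U ⬝ᵥ g t)) - (U ⬝ᵥ z t) ^ 2)
      ≤ a * (U ⬝ᵥ U) + ∑ t ∈ Finset.range T, n t * (g t ⬝ᵥ ((A (t + 1))⁻¹ *ᵥ g t)) :=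
  soba_second_order_regret_lemma_general N T a ha z α n hn g hg A hA0 hA θ hθ0 hθ W hW m hm hinv U
end

section
/- Let N ≥ 1, let B be a positive-definite N×N real matrix, and let θ, z ∈ ℝ^N and α ∈ ℝ. Define w = −B^{−1}θ, A = B + z zᵀ (also positive definite), and w' = −A^{−1}(θ + α z). Then for every u ∈ ℝ^N: (1/2)(⟨w, z⟩ + α)²(1 − zᵀ A^{−1} z) − (1/2)(⟨u, z⟩ + α)² ≤ (1/2)(u − w)ᵀ B (u − w) − (1/2)(u − w')ᵀ A (u − w'). -/
/-!
The inequality is an identity. With `d = w - w'`, the two normal equations `B w = -θ` and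
`A w' = -(θ + α z)` give `A d = (⟨w, z⟩ + α) z`. Expanding the `A`-form of `u - w' = (u - w) + d`
and using `A = B + z zᵀ`, everything cancels except `(⟨u, z⟩ + α)²` and
`(⟨w, z⟩ + α)² (1 - zᵀ A⁻¹ z)`. Only the symmetry of `A` and a solution `v` of `A v = z` are
needed, so the identity holds over any commutative ring.
-/

open Matrix

namespace Matrix

variable {R n : Type*} [CommRing R]

theorem isSymm_vecMulVec_self (z : n → R) : (vecMulVec z z).IsSymm :=
  IsSymm.ext fun i j => mul_comm (z j) (z i)

variable [Fintype n]

theorem mulVec_nonsing_inv_mulVec [DecidableEq n] {A : Matrix n n R} (hA : IsUnit A.det)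
    (x : n → R) : A *ᵥ (A⁻¹ *ᵥ x) = x := by
  rw [mulVec_mulVec, mul_nonsing_inv _ hA, one_mulVec]

theorem vecMulVec_self_mulVec (z x : n → R) : vecMulVec z z *ᵥ x = (z ⬝ᵥ x) • z := by
  rw [vecMulVec_mulVec, op_smul_eq_smul]

theorem IsSymm.dotProduct_mulVec_comm {A : Matrix n n R} (hA : A.IsSymm) (x y : n → R) :
    x ⬝ᵥ (A *ᵥ y) = y ⬝ᵥ (A *ᵥ x) := by
  rw [dotProduct_mulVec, ← mulVec_transpose, hA.eq, dotProduct_comm]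

theorem IsSymm.dotProduct_mulVec_add_self {A : Matrix n n R} (hA : A.IsSymm) (x d : n → R) :
    (x + d) ⬝ᵥ (A *ᵥ (x + d)) = x ⬝ᵥ (A *ᵥ x) + 2 * x ⬝ᵥ (A *ᵥ d) + d ⬝ᵥ (A *ᵥ d) := by
  rw [mulVec_add, add_dotProduct, dotProduct_add, dotProduct_add, hA.dotProduct_mulVec_comm d x]
  ring

theorem dotProduct_mulVec_add_vecMulVec_self (B : Matrix n n R) (z x : n → R) :
    x ⬝ᵥ ((B + vecMulVec z z) *ᵥ x) = x ⬝ᵥ (B *ᵥ x) + (x ⬝ᵥ z) ^ 2 := by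
  rw [add_mulVec, dotProduct_add, vecMulVec_self_mulVec, dotProduct_smul, smul_eq_mul,
    dotProduct_comm z x, sq]

theorem quadForm_sub_quadForm_rankOneUpdate {B : Matrix n n R} (hB : B.IsSymm)
    {θ z v w w' : n → R} {α : R} (hw : B *ᵥ w = -θ)
    (hw' : (B + vecMulVec z z) *ᵥ w' = -(θ + α • z)) (hv : (B + vecMulVec z z) *ᵥ v = z)
    (u : n → R) :
    (u - w) ⬝ᵥ (B *ᵥ (u - w)) - (u - w') ⬝ᵥ ((B + vecMulVec z z) *ᵥ (u - w'))
      = (w ⬝ᵥ z + α) ^ 2 * (1 - z ⬝ᵥ v) - (u ⬝ᵥ z + α) ^ 2 := by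
  set A := B + vecMulVec z z
  have hA : A.IsSymm := hB.add (isSymm_vecMulVec_self z)
  have hAd : A *ᵥ (w - w') = (w ⬝ᵥ z + α) • z := by
    rw [mulVec_sub, hw', add_mulVec, hw, vecMulVec_self_mulVec, dotProduct_comm z w]
    module
  have hdz : (w - w') ⬝ᵥ z = (w ⬝ᵥ z + α) * (z ⬝ᵥ v) := by
    have h := hA.dotProduct_mulVec_comm v (w - w')
    rw [hAd, hv, dotProduct_smul, smul_eq_mul] at h
    rw [← h, dotProduct_comm v z]
  have hsplit : u - w' = (u - w) + (w - w') := by abel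
  rw [hsplit, hA.dotProduct_mulVec_add_self, dotProduct_mulVec_add_vecMulVec_self, hAd,
    dotProduct_smul, dotProduct_smul, smul_eq_mul, smul_eq_mul, hdz, sub_dotProduct u w z]
  ring

end Matrix

theorem online_least_squares_per_step_general
    (N : ℕ)
    (B : Matrix (Fin N) (Fin N) ℝ) (hB : B.PosDef)
    (θ z : Fin N → ℝ) (α : ℝ)
    (w : Fin N → ℝ) (hw : w = -(B⁻¹ *ᵥ θ))
    (A : Matrix (Fin N) (Fin N) ℝ) (hA : A = B + Matrix.vecMulVec z z)
    (w' : Fin N → ℝ) (hw' : w' = -(A⁻¹ *ᵥ (θ + α • z)))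
    (u : Fin N → ℝ) :
    1 / 2 * (w ⬝ᵥ z + α) ^ 2 * (1 - z ⬝ᵥ (A⁻¹ *ᵥ z)) - 1 / 2 * (u ⬝ᵥ z + α) ^ 2
      ≤ 1 / 2 * ((u - w) ⬝ᵥ (B *ᵥ (u - w))) - 1 / 2 * ((u - w') ⬝ᵥ (A *ᵥ (u - w'))) := by
  have hBsymm : B.IsSymm := isHermitian_iff_isSymm.mp hB.isHermitian
  have hApd : A.PosDef := by
    simpa [hA] using hB.add_posSemidef (posSemidef_vecMulVec_self_star z)
  have hAu : IsUnit A.det := hApd.det_pos.ne'.isUnit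
  have hBw : B *ᵥ w = -θ := by
    rw [hw, mulVec_neg, mulVec_nonsing_inv_mulVec hB.det_pos.ne'.isUnit]
  have hAw' : A *ᵥ w' = -(θ + α • z) := by
    rw [hw', mulVec_neg, mulVec_nonsing_inv_mulVec hAu]
  subst hA
  have key := quadForm_sub_quadForm_rankOneUpdate hBsymm hBw hAw'
    (mulVec_nonsing_inv_mulVec hAu z) u
  linarith

theorem online_least_squares_per_step
    (N : ℕ) (hN : 1 ≤ N)
    (B : Matrix (Fin N) (Fin N) ℝ) (hB : B.PosDef)
    (θ z : Fin N → ℝ) (α : ℝ)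
    (w : Fin N → ℝ) (hw : w = -(B⁻¹ *ᵥ θ))
    (A : Matrix (Fin N) (Fin N) ℝ) (hA : A = B + Matrix.vecMulVec z z)
    (w' : Fin N → ℝ) (hw' : w' = -(A⁻¹ *ᵥ (θ + α • z)))
    (u : Fin N → ℝ) :
    1 / 2 * (w ⬝ᵥ z + α) ^ 2 * (1 - z ⬝ᵥ (A⁻¹ *ᵥ z)) - 1 / 2 * (u ⬝ᵥ z + α) ^ 2
      ≤ 1 / 2 * ((u - w) ⬝ᵥ (B *ᵥ (u - w))) - 1 / 2 * ((u - w') ⬝ᵥ (A *ᵥ (u - w'))) :=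
  online_least_squares_per_step_general N B hB θ z α w hw A hA w' hw' u
end

section
/- Let N ≥ 1, a > 0, and for t = 1,…,T let z_t ∈ ℝ^N and n_t ∈ {0,1}. Define A_0 = a·I and A_t = A_{t−1} + n_t z_t z_tᵀ. Then Σ_{t=1}^T n_t · z_tᵀ A_t^{−1} z_t ≤ ln(det(A_T) / a^N) ≤ N · ln(1 + (Σ_{t=1}^T n_t ‖z_t‖²) / (a N)). -/
open Finset Matrix

/-!
By the matrix determinant lemma, `det A_{t-1} / det A_t = 1 - n_t z_tᵀ A_t⁻¹ z_t`, so
`log x ≤ x - 1` bounds each summand by the increment `log det A_t - log det A_{t-1}`, and the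
sum telescopes. For the upper bound, AM–GM on the eigenvalues gives
`det A_T ≤ (tr A_T / N) ^ N`, and the trace grows by exactly `n_t ‖z_t‖²` at each step.
-/

theorem Real.prod_le_sum_div_card_pow {ι : Type*} (s : Finset ι) {x : ι → ℝ}
    (hx : ∀ i ∈ s, 0 ≤ x i) : ∏ i ∈ s, x i ≤ ((∑ i ∈ s, x i) / #s) ^ #s := by
  rcases s.eq_empty_or_nonempty with rfl | hs
  · simp
  have hamgm := Real.geom_mean_le_arith_mean s (fun _ ↦ 1) x (fun _ _ ↦ zero_le_one)
    (by simpa using hs) hx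
  simp only [Real.rpow_one, sum_const, nsmul_eq_mul, mul_one, one_mul] at hamgm
  calc ∏ i ∈ s, x i = ((∏ i ∈ s, x i) ^ ((#s : ℝ)⁻¹)) ^ #s :=
        (Real.rpow_inv_natCast_pow (prod_nonneg hx) hs.card_pos.ne').symm
    _ ≤ ((∑ i ∈ s, x i) / #s) ^ #s :=
        pow_le_pow_left₀ (Real.rpow_nonneg (prod_nonneg hx) _) hamgm _

namespace Matrix

variable {n : Type*} [Fintype n] [DecidableEq n]

theorem PosSemidef.det_le_trace_div_card_pow {A : Matrix n n ℝ} (hA : A.PosSemidef) :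
    A.det ≤ (A.trace / Fintype.card n) ^ Fintype.card n := by
  rw [hA.isHermitian.det_eq_prod_eigenvalues, hA.isHermitian.trace_eq_sum_eigenvalues]
  simpa using Real.prod_le_sum_div_card_pow univ fun i _ ↦ hA.eigenvalues_nonneg i

theorem det_add_vecMulVec {R : Type*} [CommRing R] {A : Matrix n n R} (hA : IsUnit A.det)
    (u v : n → R) : (A + vecMulVec u v).det = A.det * (1 + v ⬝ᵥ (A⁻¹ *ᵥ u)) := by
  rw [vecMulVec_eq Unit, det_add_replicateCol_mul_replicateRow hA]
  congr 1
  rw [Matrix.mul_assoc, ← replicateCol_mulVec, det_unique]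
  simp [replicateRow_mul_replicateCol_apply]

omit [DecidableEq n] in
theorem PosDef.add_smul_vecMulVec_self {A : Matrix n n ℝ} (hA : A.PosDef) {c : ℝ} (hc : 0 ≤ c)
    (z : n → ℝ) : (A + c • vecMulVec z z).PosDef :=
  hA.add_posSemidef ((posSemidef_vecMulVec_self_star z).smul hc)

theorem PosDef.mul_dotProduct_inv_mulVec_le_log_det_sub {A : Matrix n n ℝ} (hA : A.PosDef)
    {c : ℝ} (hc : 0 ≤ c) (z : n → ℝ) :
    c * (z ⬝ᵥ ((A + c • vecMulVec z z)⁻¹ *ᵥ z))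
      ≤ Real.log (A + c • vecMulVec z z).det - Real.log A.det := by
  set B := A + c • vecMulVec z z
  have hB : 0 < B.det := (hA.add_smul_vecMulVec_self hc z).det_pos
  have hdet : A.det = B.det * (1 - c * (z ⬝ᵥ (B⁻¹ *ᵥ z))) := by
    have hAB : A = B + vecMulVec (-(c • z)) z := by
      simp [B, smul_vecMulVec]
    conv_lhs => rw [hAB, det_add_vecMulVec (isUnit_iff_ne_zero.mpr hB.ne')]
    simp [mulVec_neg, mulVec_smul, sub_eq_add_neg]
  have hratio : A.det / B.det = 1 - c * (z ⬝ᵥ (B⁻¹ *ᵥ z)) := by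
    rw [hdet, mul_div_cancel_left₀ _ hB.ne']
  have hlog := Real.log_le_sub_one_of_pos (div_pos hA.det_pos hB)
  rw [Real.log_div hA.det_pos.ne' hB.ne', hratio] at hlog
  linarith

end Matrix

theorem soba_log_det_bound
    (N T : ℕ) (hN : 1 ≤ N) (a : ℝ) (ha : 0 < a)
    (z : ℕ → Fin N → ℝ)
    (n : ℕ → ℝ) (hn : ∀ t, n t = 0 ∨ n t = 1)
    (A : ℕ → Matrix (Fin N) (Fin N) ℝ)
    (hA0 : A 0 = a • (1 : Matrix (Fin N) (Fin N) ℝ))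
    (hA : ∀ t, A (t + 1) = A t + n t • Matrix.vecMulVec (z t) (z t)) :
    ∑ t ∈ Finset.range T, n t * (z t ⬝ᵥ ((A (t + 1))⁻¹ *ᵥ z t))
        ≤ Real.log ((A T).det / a ^ N)
      ∧ Real.log ((A T).det / a ^ N)
        ≤ N * Real.log (1 + (∑ t ∈ Finset.range T, n t * (z t ⬝ᵥ z t)) / (a * N)) := by
  have hn_nonneg (t : ℕ) : 0 ≤ n t := by rcases hn t with h | h <;> simp [h]
  have hpos (t : ℕ) : (A t).PosDef := by
    induction t with
    | zero => rw [hA0]; exact PosDef.one.smul ha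
    | succ t ih => rw [hA t]; exact ih.add_smul_vecMulVec_self (hn_nonneg t) (z t)
  have htrace : (A T).trace = a * N + ∑ t ∈ range T, n t * (z t ⬝ᵥ z t) := by
    induction T with
    | zero => simp [hA0]
    | succ T ih =>
      rw [hA T, trace_add, trace_smul, trace_vecMulVec, ih, sum_range_succ, smul_eq_mul]
      ring
  have hlog : Real.log ((A T).det / a ^ N) = Real.log (A T).det - Real.log (A 0).det := by
    rw [Real.log_div (hpos T).det_pos.ne' (by positivity), hA0]
    simp
  constructor
  · calc ∑ t ∈ range T, n t * (z t ⬝ᵥ ((A (t + 1))⁻¹ *ᵥ z t))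
        ≤ ∑ t ∈ range T, (Real.log (A (t + 1)).det - Real.log (A t).det) :=
          sum_le_sum fun t _ ↦ by
            rw [hA t]
            exact (hpos t).mul_dotProduct_inv_mulVec_le_log_det_sub (hn_nonneg t) (z t)
      _ = Real.log ((A T).det / a ^ N) := by
          rw [sum_range_sub (fun t ↦ Real.log (A t).det), hlog]
  · have hNa : a * N ≠ 0 := (mul_pos ha (by exact_mod_cast hN)).ne'
    calc Real.log ((A T).det / a ^ N) ≤ Real.log (((A T).trace / N) ^ N / a ^ N) := by
          have hdet_le := (hpos T).posSemidef.det_le_trace_div_card_pow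
          rw [Fintype.card_fin] at hdet_le
          gcongr
          exact div_pos (hpos T).det_pos (by positivity)
      _ = N * Real.log (1 + (∑ t ∈ range T, n t * (z t ⬝ᵥ z t)) / (a * N)) := by
          rw [← div_pow, div_div, mul_comm (N : ℝ) a, htrace, add_div, div_self hNa,
            Real.log_pow]
end

section
/- Let b > 0, a > 0, T ≥ 1, and let c_1,…,c_T be real numbers with 0 ≤ c_t ≤ b for all t. Define γ_t = min( √((b + Σ_{s=1}^{t−1} c_s)/t), 1 ) for each t ∈ [T]. Then Σ_{t=1}^T ( γ_t + a · c_t/γ_t ) ≤ (2 + 2a) √T · √(b + Σ_{t=1}^T c_t) + a · Σ_{t=1}^T c_t. -/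
/-!
Write `S t = ∑ s < t, c s` and `A = √(b + S T)`. Since `γ t ≤ √(b + S t) / √(t + 1) ≤ A / √(t + 1)`
and `1 / γ t ≤ √(t + 1) / √(b + S t) + 1`, both sums are controlled by the telescoping bound
`(y - x) / √z ≤ 2 (√y - √x)` for `0 ≤ x ≤ y ≤ z`: once with `x, y, z = t, t + 1, t + 1`, giving
`∑ 1 / √(t + 1) ≤ 2 √T`, and once with `x, y, z = S t, S (t + 1), b + S t` (here `c t ≤ b` is used),
giving `∑ c t / √(b + S t) ≤ 2 √(S T)`.
-/

open Finset

namespace Real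

theorem sub_div_sqrt_le_two_mul_sqrt_sub {x y z : ℝ} (hx : 0 ≤ x) (hxy : x ≤ y) (hyz : y ≤ z) :
    (y - x) / √z ≤ 2 * (√y - √x) := by
  have hsqrt_xy : √x ≤ √y := sqrt_le_sqrt hxy
  have hsqrt_yz : √y ≤ √z := sqrt_le_sqrt hyz
  refine div_le_of_le_mul₀ (sqrt_nonneg z) (by linarith) ?_
  calc y - x = (√y - √x) * (√y + √x) := by
        linear_combination sq_sqrt hx - sq_sqrt (hx.trans hxy)
    _ ≤ (√y - √x) * (2 * √z) := by gcongr; linarith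
    _ = 2 * (√y - √x) * √z := by ring

theorem sum_sub_div_sqrt_le {T : ℕ} {y z : ℕ → ℝ} (hy : ∀ t < T, 0 ≤ y t)
    (hy_succ : ∀ t < T, y t ≤ y (t + 1)) (hz : ∀ t < T, y (t + 1) ≤ z t) :
    ∑ t ∈ range T, (y (t + 1) - y t) / √(z t) ≤ 2 * (√(y T) - √(y 0)) := by
  calc ∑ t ∈ range T, (y (t + 1) - y t) / √(z t)
      ≤ ∑ t ∈ range T, 2 * (√(y (t + 1)) - √(y t)) := by
        refine sum_le_sum fun t ht => ?_
        rw [mem_range] at ht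
        exact sub_div_sqrt_le_two_mul_sqrt_sub (hy t ht) (hy_succ t ht) (hz t ht)
    _ = 2 * (√(y T) - √(y 0)) := by
        rw [← mul_sum, sum_range_sub (fun t => √(y t))]

theorem sum_range_inv_sqrt_succ_le (T : ℕ) : ∑ t ∈ range T, 1 / √((t : ℝ) + 1) ≤ 2 * √T := by
  have h := sum_sub_div_sqrt_le (T := T) (y := fun t : ℕ => (t : ℝ)) (z := fun t => (t : ℝ) + 1)
    (fun t _ => t.cast_nonneg) (fun t _ => by push_cast; linarith) (fun t _ => by push_cast; rfl)
  simpa using h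

end Real

theorem div_min_one_le {u c : ℝ} (hc : 0 ≤ c) : c / min u 1 ≤ c / u + c := by
  rcases le_total u 1 with hu | hu
  · rw [min_eq_left hu]; linarith
  · rw [min_eq_right hu, div_one]
    have : 0 ≤ c / u := div_nonneg hc (zero_le_one.trans hu)
    linarith

section PartialSums

variable {b : ℝ} {c : ℕ → ℝ} {T : ℕ}

theorem sum_min_sqrt_div_succ_le (hc : ∀ t < T, 0 ≤ c t) :
    ∑ t ∈ range T, min (√((b + ∑ s ∈ range t, c s) / (t + 1))) 1
      ≤ 2 * √T * √(b + ∑ t ∈ range T, c t) := by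
  set A := √(b + ∑ t ∈ range T, c t)
  have hterm : ∀ t ∈ range T,
      min (√((b + ∑ s ∈ range t, c s) / (t + 1))) 1 ≤ A * (1 / √((t : ℝ) + 1)) := by
    intro t ht
    have hsum_le : ∑ s ∈ range t, c s ≤ ∑ s ∈ range T, c s :=
      sum_le_sum_of_subset_of_nonneg (range_subset_range.2 (mem_range.1 ht).le)
        fun s hs _ => hc s (mem_range.1 hs)
    calc min (√((b + ∑ s ∈ range t, c s) / (t + 1))) 1
        ≤ √(b + ∑ s ∈ range t, c s) / √((t : ℝ) + 1) := by
          rw [← Real.sqrt_div' _ (by positivity)]; exact min_le_left _ _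
      _ ≤ A * (1 / √((t : ℝ) + 1)) := by
          rw [mul_one_div]; gcongr; exact Real.sqrt_le_sqrt (by linarith)
  calc _ ≤ A * ∑ t ∈ range T, 1 / √((t : ℝ) + 1) := by rw [mul_sum]; exact sum_le_sum hterm
    _ ≤ A * (2 * √T) := by gcongr; exact Real.sum_range_inv_sqrt_succ_le T
    _ = 2 * √T * A := by ring

theorem sum_div_sqrt_add_partial_sum_le (hb : 0 ≤ b) (hc : ∀ t < T, 0 ≤ c t ∧ c t ≤ b) :
    ∑ t ∈ range T, c t / √(b + ∑ s ∈ range t, c s) ≤ 2 * √(b + ∑ t ∈ range T, c t) := by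
  set S : ℕ → ℝ := fun t => ∑ s ∈ range t, c s
  have hS_succ : ∀ t, S (t + 1) = S t + c t := fun t => sum_range_succ c t
  have h := Real.sum_sub_div_sqrt_le (T := T) (y := S) (z := fun t => b + S t)
    (fun t ht => sum_nonneg fun s hs => (hc s ((mem_range.1 hs).trans ht)).1)
    (fun t ht => by rw [hS_succ]; linarith [(hc t ht).1])
    (fun t ht => by rw [hS_succ]; linarith [(hc t ht).2])
  simp only [S, sum_range_succ_sub_sum, range_zero, sum_empty, Real.sqrt_zero, sub_zero] at h
  calc _ ≤ 2 * √(S T) := h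
    _ ≤ 2 * √(b + S T) := by gcongr; linarith

theorem sum_div_min_sqrt_div_succ_le (hb : 0 ≤ b) (hc : ∀ t < T, 0 ≤ c t ∧ c t ≤ b) :
    ∑ t ∈ range T, c t / min (√((b + ∑ s ∈ range t, c s) / (t + 1))) 1
      ≤ 2 * √T * √(b + ∑ t ∈ range T, c t) + ∑ t ∈ range T, c t := by
  have hterm : ∀ t ∈ range T, c t / min (√((b + ∑ s ∈ range t, c s) / (t + 1))) 1
      ≤ √T * (c t / √(b + ∑ s ∈ range t, c s)) + c t := by
    intro t ht
    rw [mem_range] at ht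
    calc _ ≤ c t / √((b + ∑ s ∈ range t, c s) / (t + 1)) + c t := div_min_one_le (hc t ht).1
      _ = √((t : ℝ) + 1) * (c t / √(b + ∑ s ∈ range t, c s)) + c t := by
          rw [Real.sqrt_div' _ (by positivity), div_div_eq_mul_div]; ring
      _ ≤ √T * (c t / √(b + ∑ s ∈ range t, c s)) + c t := by
          have : 0 ≤ c t / √(b + ∑ s ∈ range t, c s) := div_nonneg (hc t ht).1 (Real.sqrt_nonneg _)
          gcongr
          exact_mod_cast ht
  calc _ ≤ ∑ t ∈ range T, (√T * (c t / √(b + ∑ s ∈ range t, c s)) + c t) := sum_le_sum hterm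
    _ = √T * ∑ t ∈ range T, c t / √(b + ∑ s ∈ range t, c s) + ∑ t ∈ range T, c t := by
        rw [sum_add_distrib, mul_sum]
    _ ≤ √T * (2 * √(b + ∑ t ∈ range T, c t)) + ∑ t ∈ range T, c t := by
        gcongr; exact sum_div_sqrt_add_partial_sum_le hb hc
    _ = 2 * √T * √(b + ∑ t ∈ range T, c t) + ∑ t ∈ range T, c t := by ring

end PartialSums

theorem adaptive_exploration_rate_bound_general
    (b a : ℝ) (hb : 0 < b) (ha : 0 < a)
    (T : ℕ)
    (c : ℕ → ℝ) (hc : ∀ t < T, 0 ≤ c t ∧ c t ≤ b)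
    (γ : ℕ → ℝ)
    (hγ : ∀ t, γ t = min (Real.sqrt ((b + ∑ s ∈ Finset.range t, c s) / (t + 1))) 1) :
    ∑ t ∈ Finset.range T, (γ t + a * (c t / γ t))
      ≤ (2 + 2 * a) * Real.sqrt T * Real.sqrt (b + ∑ t ∈ Finset.range T, c t)
        + a * ∑ t ∈ Finset.range T, c t := by
  have hγ_sum := sum_min_sqrt_div_succ_le (b := b) fun t ht => (hc t ht).1
  have hratio_sum := sum_div_min_sqrt_div_succ_le hb.le hc
  simp only [← hγ] at hγ_sum hratio_sum
  have := mul_le_mul_of_nonneg_left hratio_sum ha.le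
  rw [sum_add_distrib, ← mul_sum]
  linarith

theorem adaptive_exploration_rate_bound
    (b a : ℝ) (hb : 0 < b) (ha : 0 < a)
    (T : ℕ) (hT : 1 ≤ T)
    (c : ℕ → ℝ) (hc : ∀ t < T, 0 ≤ c t ∧ c t ≤ b)
    (γ : ℕ → ℝ)
    (hγ : ∀ t, γ t = min (Real.sqrt ((b + ∑ s ∈ Finset.range t, c s) / (t + 1))) 1) :
    ∑ t ∈ Finset.range T, (γ t + a * (c t / γ t))
      ≤ (2 + 2 * a) * Real.sqrt T * Real.sqrt (b + ∑ t ∈ Finset.range T, c t)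
        + a * ∑ t ∈ Finset.range T, c t :=
  adaptive_exploration_rate_bound_general b a hb ha T c hc γ hγ
end

section
/- Let L, T, H, U be positive real numbers and define F(γ) = min( T, L + γT + UH/γ + √(UHL/γ) ) for γ ∈ (0,1]. If L ≤ (U+1)√(HT), then for γ* = min(√(H/T), 1) one has F(γ*) ≤ L + 3(U+1)√(HT). -/
/-!
With `s = √(HT)`, the choice `γ = √(H/T)` balances the two main terms: `γT = H/γ = s`. Then
`√(UHL/γ) = √(ULs) ≤ (U+1)s` because `L ≤ (U+1)s`, so the second argument of the minimum is at
most `L + 2(U+1)s`. If instead `√(H/T) > 1`, then `T < H`, and the first argument `T ≤ s` already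
suffices.
-/

namespace Real

lemma sqrt_div_mul_self_eq_sqrt_mul (H : ℝ) {T : ℝ} (hT : 0 < T) :
    √(H / T) * T = √(H * T) := by
  rw [show H * T = H / T * T ^ 2 by field_simp, sqrt_mul' _ (sq_nonneg T), sqrt_sq hT.le]

lemma div_sqrt_div_eq_sqrt_mul {H T : ℝ} (hH : 0 < H) (hT : 0 < T) :
    H / √(H / T) = √(H * T) := by
  rw [div_eq_iff (sqrt_pos.2 (div_pos hH hT)).ne', ← sqrt_mul (by positivity),
    show H * T * (H / T) = H ^ 2 by field_simp, sqrt_sq hH.le]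

lemma sqrt_mul_mul_le_of_le {U L s : ℝ} (hU : 0 ≤ U) (hs : 0 ≤ s) (hL : L ≤ (U + 1) * s) :
    √(U * L * s) ≤ (U + 1) * s := by
  rw [sqrt_le_left (by positivity)]
  calc U * L * s ≤ U * ((U + 1) * s) * s := by gcongr
    _ ≤ ((U + 1) * s) ^ 2 := by nlinarith [mul_nonneg hU hs]

lemma le_sqrt_mul_of_one_lt_sqrt_div {H T : ℝ} (hT : 0 < T) (h : 1 < √(H / T)) :
    T ≤ √(H * T) := by
  have hTH : T < H := by
    rwa [lt_sqrt zero_le_one, one_pow, one_lt_div hT] at h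
  calc T = √(T * T) := (sqrt_mul_self hT.le).symm
    _ ≤ √(H * T) := sqrt_le_sqrt (by gcongr)

end Real

open Real in
theorem fallback_tuning_large_loss
    (L T H U : ℝ) (hL : 0 < L) (hT : 0 < T) (hH : 0 < H) (hU : 0 < U)
    (F : ℝ → ℝ)
    (hF : ∀ γ, F γ = min T (L + γ * T + U * H / γ + Real.sqrt (U * H * L / γ)))
    (hcond : L ≤ (U + 1) * Real.sqrt (H * T)) :
    F (min (Real.sqrt (H / T)) 1) ≤ L + 3 * (U + 1) * Real.sqrt (H * T) := by
  have hs : 0 ≤ √(H * T) := sqrt_nonneg _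
  rw [hF]
  rcases le_or_gt √(H / T) 1 with h | h
  · rw [min_eq_left h]
    refine (min_le_right _ _).trans ?_
    rw [show U * H * L / √(H / T) = U * L * (H / √(H / T)) by ring, mul_div_assoc,
      sqrt_div_mul_self_eq_sqrt_mul H hT, div_sqrt_div_eq_sqrt_mul hH hT]
    nlinarith [sqrt_mul_mul_le_of_le hU.le hs hcond]
  · refine (min_le_left _ _).trans ?_
    nlinarith [le_sqrt_mul_of_one_lt_sqrt_div hT h]
end

section
/- Let L, T, H, U be positive real numbers and define F(γ) = min( T, L + γT + UH/γ + √(UHL/γ) ) for γ ∈ (0,1]. If L > (U+1)√(HT), then for γ* = min((HL/T²)^{1/3}, 1) one has F(γ*) ≤ L + 2(√U + 1)(HLT)^{1/3}. -/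
private lemma cube_inj' {x y : ℝ} (hx : 0 ≤ x) (hy : 0 ≤ y) (h : x ^ 3 = y ^ 3) :
    x = y :=
  le_antisymm (le_of_pow_le_pow_left₀ (by norm_num) hy h.le)
    (le_of_pow_le_pow_left₀ (by norm_num) hx h.ge)

theorem fallback_tuning_small_loss
    (L T H U : ℝ) (hL : 0 < L) (hT : 0 < T) (hH : 0 < H) (hU : 0 < U)
    (F : ℝ → ℝ)
    (hF : ∀ γ, F γ = min T (L + γ * T + U * H / γ + Real.sqrt (U * H * L / γ)))
    (hcond : (U + 1) * Real.sqrt (H * T) < L) :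
    F (min ((H * L / T ^ 2) ^ ((1 : ℝ) / 3)) 1)
      ≤ L + 2 * (Real.sqrt U + 1) * (H * L * T) ^ ((1 : ℝ) / 3) := by
  set a : ℝ := (H * L / T ^ 2) ^ ((1 : ℝ) / 3) with ha_def
  set c : ℝ := (H * L * T) ^ ((1 : ℝ) / 3) with hc_def
  set s : ℝ := Real.sqrt U with hs_def
  have hs : 0 ≤ s := Real.sqrt_nonneg U
  have hs2 : s ^ 2 = U := Real.sq_sqrt hU.le
  have ha : 0 < a := Real.rpow_pos_of_pos (by positivity) _
  have hc : 0 < c := Real.rpow_pos_of_pos (by positivity) _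
  have ha3 : a ^ 3 = H * L / T ^ 2 := by
    rw [ha_def, ← Real.rpow_natCast ((H * L / T ^ 2) ^ ((1 : ℝ) / 3)) 3,
      ← Real.rpow_mul (by positivity)]
    norm_num
  have hc3 : c ^ 3 = H * L * T := by
    rw [hc_def, ← Real.rpow_natCast ((H * L * T) ^ ((1 : ℝ) / 3)) 3,
      ← Real.rpow_mul (by positivity)]
    norm_num
  -- squared condition
  have hHT : (0 : ℝ) ≤ H * T := by positivity
  have hL2 : (U + 1) ^ 2 * (H * T) < L ^ 2 := by
    have h0 : 0 ≤ (U + 1) * Real.sqrt (H * T) := by positivity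
    have h1 := mul_self_lt_mul_self h0 hcond
    nlinarith [Real.sq_sqrt hHT]
  rcases le_total a 1 with hle | hge
  · -- γ* = a
    have hmin : min a 1 = a := min_eq_left hle
    have haT : a * T = c := by
      apply cube_inj' (by positivity) hc.le
      rw [mul_pow, ha3, hc3]
      field_simp
    have hHLa : H * L / a = c ^ 2 := by
      apply cube_inj' (by positivity) (by positivity)
      rw [div_pow, ha3, show (c ^ 2) ^ 3 = (c ^ 3) ^ 2 by ring, hc3]
      field_simp
    have hsqrt : Real.sqrt (U * H * L / a) = s * c := by
      have e : U * H * L / a = U * c ^ 2 := by rw [← hHLa]; ring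
      rw [e, Real.sqrt_mul hU.le, Real.sqrt_sq hc.le, hs_def]
    have key : U * H / a ≤ (s + 1) * c := by
      refine le_of_pow_le_pow_left₀ (n := 3) (by norm_num) (by positivity) ?_
      have e1 : (U * H / a) ^ 3 = U ^ 3 * H ^ 2 * T ^ 2 / L := by
        rw [div_pow, ha3]
        field_simp
      have e2 : ((s + 1) * c) ^ 3 = (s + 1) ^ 3 * (H * L * T) := by
        rw [mul_pow, hc3]
      rw [e1, e2, div_le_iff₀ hL]
      have hpoly : s ^ 6 ≤ (s + 1) ^ 3 * (s ^ 2 + 1) ^ 2 := by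
        nlinarith [pow_nonneg hs 7, pow_nonneg hs 6, pow_nonneg hs 5, pow_nonneg hs 4,
          pow_nonneg hs 3, sq_nonneg s, hs]
      have h1 : (s ^ 2 + 1) ^ 2 * (H * T) ≤ L ^ 2 := by
        have : (s ^ 2 + 1) ^ 2 * (H * T) = (U + 1) ^ 2 * (H * T) := by rw [hs2]
        linarith
      have B1 : s ^ 6 * (H ^ 2 * T ^ 2) ≤ (s + 1) ^ 3 * (s ^ 2 + 1) ^ 2 * (H ^ 2 * T ^ 2) :=
        mul_le_mul_of_nonneg_right hpoly (by positivity)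
      have B2 : (s + 1) ^ 3 * (H * T) * ((s ^ 2 + 1) ^ 2 * (H * T)) ≤
          (s + 1) ^ 3 * (H * T) * L ^ 2 :=
        mul_le_mul_of_nonneg_left h1 (by positivity)
      have hU3 : U ^ 3 = s ^ 6 := by rw [← hs2]; ring
      rw [hU3]
      linarith [B1, B2]
    rw [hF, hmin]
    calc min T (L + a * T + U * H / a + Real.sqrt (U * H * L / a))
        ≤ L + a * T + U * H / a + Real.sqrt (U * H * L / a) := min_le_right _ _
      _ ≤ L + 2 * (s + 1) * c := by rw [haT, hsqrt]; linarith
  · -- γ* = 1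
    have hmin : min a 1 = 1 := min_eq_right hge
    have h1a : (1 : ℝ) ≤ a ^ 3 := by
      calc (1 : ℝ) = 1 ^ 3 := by norm_num
        _ ≤ a ^ 3 := pow_le_pow_left₀ (by norm_num) hge 3
    rw [ha3] at h1a
    have hT2 : T ^ 2 ≤ H * L := by
      rw [le_div_iff₀ (by positivity)] at h1a
      linarith
    have hTc : T ≤ c := by
      refine le_of_pow_le_pow_left₀ (n := 3) (by norm_num) hc.le ?_
      rw [hc3]
      nlinarith
    rw [hF, hmin]
    calc min T (L + 1 * T + U * H / 1 + Real.sqrt (U * H * L / 1))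
        ≤ T := min_le_left _ _
      _ ≤ L + 2 * (s + 1) * c := by nlinarith [mul_nonneg hs hc.le]
end

section
/- Let X, D > 0 and let 0 < η ≤ 1/max(2XD, 1) (equivalently, η ≤ 1 and 2XDη ≤ 1). Define f(m) = 1 − (2/(2−η))m + (η/(2−η))m². Then for every m ∈ [−2XD, 2XD]: |f'(m)| ≤ 4 and f''(m) ≥ η/2, hence f''(m)/(f'(m))² ≥ η/32 whenever f'(m) ≠ 0; consequently the function m ↦ exp(−(η/32) f(m)) is concave on the interval [−2XD, 2XD], i.e., f is (η/32)-exp-concave there. -/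
theorem etaLoss_exp_concave
    (X D η : ℝ) (hX : 0 < X) (hD : 0 < D)
    (hη0 : 0 < η) (hη : η ≤ 1 / max (2 * X * D) 1)
    (f : ℝ → ℝ) (hf : ∀ m, f m = 1 - (2 / (2 - η)) * m + (η / (2 - η)) * m ^ 2)
    (f' : ℝ → ℝ) (hf' : ∀ m, f' m = -(2 / (2 - η)) + (2 * η / (2 - η)) * m)
    (f'' : ℝ → ℝ) (hf'' : ∀ m, f'' m = 2 * η / (2 - η)) :
    (∀ m ∈ Set.Icc (-(2 * X * D)) (2 * X * D),
        |f' m| ≤ 4 ∧ η / 2 ≤ f'' m ∧ (f' m ≠ 0 → η / 32 ≤ f'' m / (f' m) ^ 2)) ∧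
      ConcaveOn ℝ (Set.Icc (-(2 * X * D)) (2 * X * D))
        (fun m => Real.exp (-(η / 32) * f m)) := by
  have hmaxpos : (0:ℝ) < max (2 * X * D) 1 := lt_of_lt_of_le one_pos (le_max_right _ _)
  have hη1 : η ≤ 1 := hη.trans (by
    rw [div_le_one hmaxpos]; exact le_max_right _ _)
  have hηmax : η * max (2 * X * D) 1 ≤ 1 := by
    rw [← le_div_iff₀ hmaxpos]; exact hη
  have hXDη : η * (2 * X * D) ≤ 1 := by
    have h1 : 2 * X * D ≤ max (2 * X * D) 1 := le_max_left _ _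
    nlinarith
  have hd : (1:ℝ) ≤ 2 - η := by linarith
  have hd0 : (0:ℝ) < 2 - η := by linarith
  have key : ∀ m ∈ Set.Icc (-(2 * X * D)) (2 * X * D), |f' m| ≤ 4 := by
    intro m hm
    obtain ⟨hm1, hm2⟩ := hm
    rw [hf', abs_le]
    have hem1 : η * m ≤ 1 := by nlinarith
    have hem2 : -1 ≤ η * m := by nlinarith
    have heqd : -(2 / (2 - η)) + 2 * η / (2 - η) * m = (-2 + 2 * η * m) / (2 - η) := by
      field_simp
    constructor
    · rw [heqd, le_div_iff₀ hd0]
      nlinarith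
    · rw [heqd, div_le_iff₀ hd0]
      nlinarith
  refine ⟨fun m hm => ?_, ?_⟩
  · have habs := key m hm
    have hsq : (f' m) ^ 2 ≤ 16 := by
      have := abs_nonneg (f' m)
      nlinarith [sq_abs (f' m)]
    have hf''ge : η / 2 ≤ f'' m := by
      rw [hf'', le_div_iff₀ hd0]; nlinarith
    refine ⟨habs, hf''ge, fun hne => ?_⟩
    rw [le_div_iff₀ (by positivity : (0:ℝ) < (f' m) ^ 2)]
    nlinarith
  · -- concavity
    have heq : (fun m => Real.exp (-(η / 32) * f m)) =
        (fun m => Real.exp (-(η / 32) * (1 - (2 / (2 - η)) * m + (η / (2 - η)) * m ^ 2))) := by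
      funext m; rw [hf]
    rw [heq]
    set P : ℝ → ℝ := fun m => -(η / 32) * (1 - (2 / (2 - η)) * m + (η / (2 - η)) * m ^ 2)
      with hP
    have hPderiv : ∀ x : ℝ, HasDerivAt P
        (-(η / 32) * (-(2 / (2 - η)) + (2 * η / (2 - η)) * x)) x := by
      intro x
      have h1 : HasDerivAt (fun m : ℝ => 1 - (2 / (2 - η)) * m + (η / (2 - η)) * m ^ 2)
          (-(2 / (2 - η)) + (2 * η / (2 - η)) * x) x := by
        have ha : HasDerivAt (fun m : ℝ => (2 / (2 - η)) * m) (2 / (2 - η)) x := by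
          simpa using (hasDerivAt_id x).const_mul (2 / (2 - η))
        have hb : HasDerivAt (fun m : ℝ => (η / (2 - η)) * m ^ 2)
            ((η / (2 - η)) * (2 * x)) x := by
          have := (hasDerivAt_pow 2 x).const_mul (η / (2 - η))
          simpa using this
        have := ((hasDerivAt_const x (1:ℝ)).sub ha).add hb
        exact this.congr_deriv (by ring)
      exact h1.const_mul (-(η / 32))
    set P' : ℝ → ℝ := fun x => -(η / 32) * (-(2 / (2 - η)) + (2 * η / (2 - η)) * x) with hP'
    have hGderiv : ∀ x : ℝ, HasDerivAt (fun m => Real.exp (P m)) (Real.exp (P x) * P' x) x :=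
      fun x => (Real.hasDerivAt_exp (P x)).comp x (hPderiv x)
    have hG2 : ∀ x : ℝ, HasDerivAt (fun m => Real.exp (P m) * P' m)
        (Real.exp (P x) * P' x * P' x +
          Real.exp (P x) * (-(η / 32) * (2 * η / (2 - η)))) x := by
      intro x
      have hP'd : HasDerivAt P' (-(η / 32) * (2 * η / (2 - η))) x := by
        have ha : HasDerivAt (fun m : ℝ => -(2 / (2 - η)) + (2 * η / (2 - η)) * m)
            (2 * η / (2 - η)) x := by
          exact ((hasDerivAt_const x (-(2 / (2 - η)))).add
            ((hasDerivAt_id x).const_mul (2 * η / (2 - η)))).congr_deriv (by simp)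
        exact ha.const_mul (-(η / 32))
      exact (hGderiv x).mul hP'd
    refine concaveOn_of_hasDerivWithinAt2_nonpos (convex_Icc _ _)
      (Continuous.continuousOn (Real.continuous_exp.comp (by fun_prop)))
      (fun x hx => ((hGderiv x).hasDerivWithinAt))
      (fun x hx => ((hG2 x).hasDerivWithinAt)) ?_
    intro x hx
    rw [interior_Icc] at hx
    obtain ⟨hx1, hx2⟩ := hx
    have habs : |f' x| ≤ 4 := key x ⟨le_of_lt hx1, le_of_lt hx2⟩
    have hsq : (f' x) ^ 2 ≤ 16 := by
      have := abs_nonneg (f' x)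
      nlinarith [sq_abs (f' x)]
    rw [hf'] at hsq
    have hexp := Real.exp_pos (P x)
    have hquad : P' x * P' x + (-(η / 32) * (2 * η / (2 - η))) ≤ 0 := by
      have hPx : P' x = -(η / 32) * (-(2 / (2 - η)) + 2 * η / (2 - η) * x) := rfl
      rw [hPx]
      have h1 : η / 2 ≤ 2 * η / (2 - η) := by
        rw [le_div_iff₀ hd0]; nlinarith
      nlinarith [mul_le_mul_of_nonneg_left hsq (by positivity : (0:ℝ) ≤ (η / 32) ^ 2),
        mul_le_mul_of_nonneg_left h1 (by positivity : (0:ℝ) ≤ η / 32)]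
    calc Real.exp (P x) * P' x * P' x + Real.exp (P x) * (-(η / 32) * (2 * η / (2 - η)))
        = Real.exp (P x) * (P' x * P' x + (-(η / 32) * (2 * η / (2 - η)))) := by ring
      _ ≤ 0 := mul_nonpos_of_nonneg_of_nonpos hexp.le hquad
end
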